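/- arXiv:1904.01985 — 5 statements merged into one kernel-verified Lean document; each statement's English description precedes it below -/
import Mathlib

section
/- If z ∈ M lies on G₀ (i.e. gᵢ(z) = 0 for at least one i), then for every d ∈ D and every active index i ∈ I(z) one has the Lie-derivative inequality ∇gᵢ(z) · f(z, d) ≤ 0; equivalently, max_{d ∈ D} max_{i ∈ I(z)} L_f gᵢ(z, d) ≤ 0. In particular, every point of the usable part ∂M ∩ G₀ satisfies this condition. -/
/-! If `∇gᵢ(z) · f(z, d₀) > 0` at a point `z` with `gᵢ(z) = 0`, then by continuity this Lie
derivative stays above some `c > 0` on a ball around `z`, on which `f(·, d₀)` is bounded.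
Solutions under the constant disturbance `d₀` starting close enough to `z` therefore stay in
that ball for a uniform time `δ`, and `gᵢ` grows by at least `c δ` along them. Starting from a
point of `M` so close to `z` that `gᵢ > -c δ` there, the solution leaves `G`: a contradiction.
This applies to every `z` in the closure of `M`, hence to `M` and to its boundary. -/

open MeasureTheory Set

/-- An admissible disturbance: a Lebesgue measurable function taking values in `D`
on `[t₀, ∞)`. -/
def Admissible {m : ℕ} (D : Set (Fin m → ℝ)) (t₀ : ℝ) (d : ℝ → Fin m → ℝ) : Prop :=
  Measurable d ∧ ∀ t, t₀ ≤ t → d t ∈ D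

/-- A solution of `ẋ = f(x, d)` from `x₀` at time `t₀` under the disturbance `d`:
an (absolutely continuous) curve satisfying the integral equation
`x t = x₀ + ∫_{t₀}^{t} f (x s) (d s) ds` for all `t ≥ t₀`. -/
def IsSolution {n m : ℕ} (f : (Fin n → ℝ) → (Fin m → ℝ) → Fin n → ℝ)
    (t₀ : ℝ) (x₀ : Fin n → ℝ) (d : ℝ → Fin m → ℝ) (x : ℝ → Fin n → ℝ) : Prop :=
  x t₀ = x₀ ∧ ∀ t, t₀ ≤ t →
    IntervalIntegrable (fun s => f (x s) (d s)) volume t₀ t ∧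
    x t = x₀ + ∫ s in t₀..t, f (x s) (d s)

/-- Assumption (A3): every initial condition and every admissible disturbance admit a
unique solution, which is bounded on every finite time interval. -/
def A3 {n m : ℕ} (f : (Fin n → ℝ) → (Fin m → ℝ) → Fin n → ℝ)
    (D : Set (Fin m → ℝ)) (t₀ : ℝ) : Prop :=
  ∀ x₀ : Fin n → ℝ, ∀ d, Admissible D t₀ d →
    (∃ x, IsSolution f t₀ x₀ d x ∧ ∀ T, t₀ ≤ T → ∃ C, ∀ t ∈ Icc t₀ T, ‖x t‖ ≤ C) ∧
    (∀ x y, IsSolution f t₀ x₀ d x → IsSolution f t₀ x₀ d y → ∀ t, t₀ ≤ t → x t = y t)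

/-- Robust positive invariance of a set `Ω`. -/
def IsRPI {n m : ℕ} (f : (Fin n → ℝ) → (Fin m → ℝ) → Fin n → ℝ)
    (D : Set (Fin m → ℝ)) (t₀ : ℝ) (Ω : Set (Fin n → ℝ)) : Prop :=
  ∀ x₀ ∈ Ω, ∀ d, Admissible D t₀ d → ∀ x, IsSolution f t₀ x₀ d x →
    ∀ t, t₀ ≤ t → x t ∈ Ω

/-- The set `R`: all initial states in `G = {x : gᵢ x ≤ 0 ∀ i}` from which every
admissible solution remains in `G` for all future time. -/
def Rset {n m p : ℕ} (f : (Fin n → ℝ) → (Fin m → ℝ) → Fin n → ℝ)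
    (D : Set (Fin m → ℝ)) (t₀ : ℝ) (g : Fin p → (Fin n → ℝ) → ℝ) : Set (Fin n → ℝ) :=
  {x₀ | (∀ i, g i x₀ ≤ 0) ∧
    ∀ d, Admissible D t₀ d → ∀ x, IsSolution f t₀ x₀ d x →
      ∀ t, t₀ ≤ t → ∀ i, g i (x t) ≤ 0}

/-- Assumption (A2): `f` is `C²` with respect to `d ∈ D`, and for every `d` in an open set
containing `D`, `f` is `C²` with respect to `x`. -/
def A2 {n m : ℕ} (f : (Fin n → ℝ) → (Fin m → ℝ) → Fin n → ℝ)
    (D : Set (Fin m → ℝ)) : Prop :=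
  (∀ x, ContDiffOn ℝ 2 (f x) D) ∧
  ∃ U : Set (Fin m → ℝ), IsOpen U ∧ D ⊆ U ∧ ∀ d ∈ U, ContDiff ℝ 2 fun x => f x d

/-- Assumption (A4): the velocity set `f(x, D)` is convex for every `x`. -/
def A4 {n m : ℕ} (f : (Fin n → ℝ) → (Fin m → ℝ) → Fin n → ℝ)
    (D : Set (Fin m → ℝ)) : Prop :=
  ∀ x : Fin n → ℝ, Convex ℝ (f x '' D)

open Filter Topology Metric

theorem mapsTo_closedBall_of_norm_deriv_right_lt {E : Type*} [NormedAddCommGroup E]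
    [NormedSpace ℝ E] {x x' : ℝ → E} {a b r K : ℝ} {z : E} (hK : 0 ≤ K)
    (hx : ContinuousOn x (Icc a b))
    (hx' : ∀ t ∈ Ico a b, HasDerivWithinAt x (x' t) (Ici t) t)
    (hspeed : ∀ t ∈ Ico a b, x t ∈ closedBall z r → ‖x' t‖ < K)
    (hr : dist (x a) z + K * (b - a) ≤ r) : MapsTo x (Icc a b) (closedBall z r) := by
  have hB : ∀ t, HasDerivAt (fun t => dist (x a) z + K * (t - a)) K t := fun t => by
    simpa using (((hasDerivAt_id t).sub_const a).const_mul K).const_add (dist (x a) z)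
  have hbound := image_norm_le_of_norm_deriv_right_lt_deriv_boundary (f := fun t => x t - z)
    (hx.sub continuousOn_const) (fun t ht => (hx' t ht).sub_const z) (by simp [dist_eq_norm]) hB
    fun t ht hnorm => hspeed t ht <| by
      rw [mem_closedBall, dist_eq_norm, hnorm]
      nlinarith [ht.2]
  intro t ht
  rw [mem_closedBall, dist_eq_norm]
  nlinarith [hbound ht, ht.2]

theorem mul_sub_le_sub_of_le_deriv_right {φ φ' : ℝ → ℝ} {a b c : ℝ} (hab : a ≤ b)
    (hφ : ContinuousOn φ (Icc a b)) (hφ' : ∀ t ∈ Ico a b, HasDerivWithinAt φ (φ' t) (Ici t) t)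
    (hc : ∀ t ∈ Ico a b, c ≤ φ' t) : c * (b - a) ≤ φ b - φ a := by
  have hline : ∀ t, HasDerivAt (fun t => φ a + c * (t - a)) c t := fun t => by
    simpa using (((hasDerivAt_id t).sub_const a).const_mul c).const_add (φ a)
  have := image_le_of_deriv_right_le_deriv_boundary
    (fun t _ => (hline t).continuousAt.continuousWithinAt) (fun t _ => (hline t).hasDerivWithinAt)
    (by simp) hφ hφ' hc ⟨hab, le_rfl⟩
  linarith

section Solution

variable {n m : ℕ} {f : (Fin n → ℝ) → (Fin m → ℝ) → Fin n → ℝ} {t₀ : ℝ} {x₀ : Fin n → ℝ}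
  {x : ℝ → Fin n → ℝ}

theorem IsSolution.continuousOn {d : ℝ → Fin m → ℝ} (hx : IsSolution f t₀ x₀ d x) :
    ContinuousOn x (Ici t₀) := by
  intro t ht
  have hT : t₀ ≤ t + 1 := by linarith [mem_Ici.1 ht]
  have hprim := intervalIntegral.continuousOn_primitive_interval' (hx.2 _ hT).1 left_mem_uIcc
  rw [uIcc_of_le hT] at hprim
  have hxT : ContinuousOn x (Icc t₀ (t + 1)) :=
    (continuousOn_const.add hprim).congr fun s hs => (hx.2 s hs.1).2
  refine (hxT t ⟨ht, by linarith⟩).mono_of_mem_nhdsWithin ?_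
  exact mem_of_superset (inter_mem_nhdsWithin _ (Iio_mem_nhds (lt_add_one t)))
    fun s hs => ⟨hs.1, hs.2.le⟩

theorem IsSolution.hasDerivWithinAt_const {d₀ : Fin m → ℝ} (hf : Continuous fun y => f y d₀)
    (hx : IsSolution f t₀ x₀ (fun _ => d₀) x) {t : ℝ} (ht : t₀ ≤ t) :
    HasDerivWithinAt x (f (x t) d₀) (Ici t) t := by
  have hF : ContinuousOn (fun s => f (x s) d₀) (Ioi t) :=
    hf.comp_continuousOn (hx.continuousOn.mono fun s hs => ht.trans (le_of_lt hs))
  have hprim := intervalIntegral.integral_hasDerivWithinAt_right (s := Ici t) (hx.2 t ht).1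
    (hF.stronglyMeasurableAtFilter_nhdsWithin measurableSet_Ioi t)
    ((hf.comp_continuousOn hx.continuousOn) t ht |>.mono fun s hs => ht.trans (le_of_lt hs))
  exact (hprim.const_add x₀).congr_of_mem (fun s hs => (hx.2 s (ht.trans hs)).2) self_mem_Ici

theorem exists_uniform_increase_of_fderiv_pos {d₀ : Fin m → ℝ}
    {g : (Fin n → ℝ) → ℝ} {z : Fin n → ℝ} (hf : Continuous fun y => f y d₀) (hg : ContDiff ℝ 1 g)
    (hpos : 0 < fderiv ℝ g z (f z d₀)) :
    ∃ δ > 0, ∃ η > 0, ∀ᶠ z₀ in 𝓝 z, ∀ x, IsSolution f t₀ z₀ (fun _ => d₀) x →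
      g z₀ + η ≤ g (x (t₀ + δ)) := by
  set φ := fun y => fderiv ℝ g y (f y d₀)
  have hφ : Continuous φ := (hg.continuous_fderiv one_ne_zero).clm_apply hf
  obtain ⟨r, hr, hφr⟩ : ∃ r > 0, ∀ y ∈ closedBall z r, φ z / 2 ≤ φ y := by
    obtain ⟨ε, hε, h⟩ := eventually_nhds_iff_ball.1
      (hφ.continuousAt.eventually (lt_mem_nhds (half_lt_self hpos)))
    exact ⟨ε / 2, half_pos hε, fun y hy => (h y (closedBall_subset_ball (half_lt_self hε) hy)).le⟩
  obtain ⟨K, hK⟩ := (isCompact_closedBall z r).exists_bound_of_continuousOn hf.continuousOn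
  set K' := max K 0 + 1
  have hK' : 0 < K' := by positivity
  set δ := r / (2 * K')
  have hδ : 0 < δ := by positivity
  refine ⟨δ, hδ, φ z / 2 * δ, by positivity, ?_⟩
  filter_upwards [ball_mem_nhds z (half_pos hr)] with z₀ hz₀ x hx
  have hxc : ContinuousOn x (Icc t₀ (t₀ + δ)) := hx.continuousOn.mono Icc_subset_Ici_self
  have hx' : ∀ t ∈ Ico t₀ (t₀ + δ), HasDerivWithinAt x (f (x t) d₀) (Ici t) t :=
    fun t ht => hx.hasDerivWithinAt_const hf ht.1
  have hball : MapsTo x (Icc t₀ (t₀ + δ)) (closedBall z r) := by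
    refine mapsTo_closedBall_of_norm_deriv_right_lt hK'.le hxc hx'
      (fun t _ ht => (hK _ ht).trans_lt (by linarith [le_max_left K 0])) ?_
    have : K' * δ = r / 2 := by simp only [δ]; field_simp
    rw [hx.1, add_sub_cancel_left, this]
    linarith [mem_ball.1 hz₀]
  have hgrowth := mul_sub_le_sub_of_le_deriv_right (by linarith)
    (hg.continuous.comp_continuousOn hxc) (fun t ht =>
      (hg.differentiable one_ne_zero (x t)).hasFDerivAt.comp_hasDerivWithinAt t (hx' t ht))
    (fun t ht => hφr _ (hball (Ico_subset_Icc_self ht)))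
  simp only [Function.comp_apply, hx.1, add_sub_cancel_left] at hgrowth
  linarith

end Solution

theorem fderiv_apply_le_zero_of_mem_closure_Rset {n m p : ℕ}
    {f : (Fin n → ℝ) → (Fin m → ℝ) → Fin n → ℝ} {D : Set (Fin m → ℝ)} {t₀ : ℝ}
    {g : Fin p → (Fin n → ℝ) → ℝ} (hf : Continuous fun q : (Fin n → ℝ) × (Fin m → ℝ) => f q.1 q.2)
    (hA3 : A3 f D t₀) {i : Fin p} (hg : ContDiff ℝ 1 (g i)) {z : Fin n → ℝ}
    (hz : z ∈ closure (Rset f D t₀ g)) (hgz : g i z = 0) {d₀ : Fin m → ℝ} (hd₀ : d₀ ∈ D) :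
    fderiv ℝ (g i) z (f z d₀) ≤ 0 := by
  by_contra! hpos
  have hfd : Continuous fun y => f y d₀ := hf.comp (continuous_id.prodMk continuous_const)
  obtain ⟨δ, hδ, η, hη, hincrease⟩ :=
    exists_uniform_increase_of_fderiv_pos (t₀ := t₀) hfd hg hpos
  have hnear : ∀ᶠ y in 𝓝 z, -η < g i y :=
    (hg.continuous.tendsto z).eventually (lt_mem_nhds (by rw [hgz]; linarith))
  obtain ⟨z₀, ⟨hincrease₀, hnear₀⟩, hz₀⟩ := mem_closure_iff_nhds.1 hz _ (hincrease.and hnear)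
  have hadm : Admissible D t₀ fun _ => d₀ := ⟨measurable_const, fun _ _ => hd₀⟩
  obtain ⟨⟨x, hx, -⟩, -⟩ := hA3 z₀ _ hadm
  linarith [hincrease₀ x hx, hz₀.2 _ hadm x hx (t₀ + δ) (by linarith) i]

theorem usable_part_condition_general {n m p : ℕ} (f : (Fin n → ℝ) → (Fin m → ℝ) → Fin n → ℝ)
    (D : Set (Fin m → ℝ)) (t₀ : ℝ) (g : Fin p → (Fin n → ℝ) → ℝ)
    (hf : Continuous fun q : (Fin n → ℝ) × (Fin m → ℝ) => f q.1 q.2)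
    (hA3 : A3 f D t₀)
    (hg : ∀ i, ContDiff ℝ 2 (g i)) :
    (∀ z ∈ Rset f D t₀ g, (∃ i, g i z = 0) →
      ∀ d ∈ D, ∀ i, g i z = 0 → fderiv ℝ (g i) z (f z d) ≤ 0) ∧
    (∀ z ∈ frontier (Rset f D t₀ g) ∩ {x | ∃ i, g i x = 0},
      ∀ d ∈ D, ∀ i, g i z = 0 → fderiv ℝ (g i) z (f z d) ≤ 0) := by
  have hclosure : ∀ z ∈ closure (Rset f D t₀ g), ∀ d ∈ D, ∀ i, g i z = 0 →
      fderiv ℝ (g i) z (f z d) ≤ 0 := fun z hz d hd i hgz =>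
    fderiv_apply_le_zero_of_mem_closure_Rset hf hA3 ((hg i).of_le one_le_two) hz hgz hd
  exact ⟨fun z hz _ => hclosure z (subset_closure hz),
    fun z hz => hclosure z (frontier_subset_closure hz.1)⟩

/-- at any point `z` of the maximal robust positively invariant set `M` lying on
`G₀` (some constraint active), the Lie derivative `L_f gᵢ(z, d) = ∇gᵢ(z)·f(z, d)` is
nonpositive for every `d ∈ D` and every active index `i`; in particular every point of the
usable part `∂M ∩ G₀` satisfies this condition. -/
theorem usable_part_condition {n m p : ℕ} (f : (Fin n → ℝ) → (Fin m → ℝ) → Fin n → ℝ)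
    (D : Set (Fin m → ℝ)) (t₀ : ℝ) (g : Fin p → (Fin n → ℝ) → ℝ)
    (hf : Continuous fun q : (Fin n → ℝ) × (Fin m → ℝ) => f q.1 q.2)
    (hDcomp : IsCompact D) (hDconv : Convex ℝ D)
    (hA2 : A2 f D) (hA3 : A3 f D t₀) (hA4 : A4 f D)
    (hg : ∀ i, ContDiff ℝ 2 (g i)) :
    (∀ z ∈ Rset f D t₀ g, (∃ i, g i z = 0) →
      ∀ d ∈ D, ∀ i, g i z = 0 → fderiv ℝ (g i) z (f z d) ≤ 0) ∧
    (∀ z ∈ frontier (Rset f D t₀ g) ∩ {x | ∃ i, g i x = 0},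
      ∀ d ∈ D, ∀ i, g i z = 0 → fderiv ℝ (g i) z (f z d) ≤ 0) :=
  usable_part_condition_general f D t₀ g hf hA3 hg
end

section
/- Let x̄ ∈ ∂M ∩ G₋ and let d̄ be an admissible disturbance whose solution from x̄ satisfies x^(d̄)(t) ∈ ∂M ∩ G₋ for t ∈ [t₀, t̄). Define the reachable set at time t as X_t(x̄) = {x^(d,x̄,t₀)(t) : d admissible}. Then X_t(x̄) ⊆ M for every t ∈ [t₀, t̄), and consequently x^(d̄)(t) ∈ ∂X_t(x̄) for every t ∈ [t₀, t̄); that is, the barrier trajectory lies on the boundary of the reachable set at each time. -/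
open MeasureTheory Set

/-- The reachable set at time `t` from `x₀`: all points reached at time `t` by solutions
from `x₀` under admissible disturbances. -/
def ReachSet {n m : ℕ} (f : (Fin n → ℝ) → (Fin m → ℝ) → Fin n → ℝ)
    (D : Set (Fin m → ℝ)) (t₀ : ℝ) (x₀ : Fin n → ℝ) (t : ℝ) : Set (Fin n → ℝ) :=
  {y | ∃ (d : ℝ → Fin m → ℝ) (x : ℝ → Fin n → ℝ),
    Admissible D t₀ d ∧ IsSolution f t₀ x₀ d x ∧ x t = y}

/-- if the solution from `xb ∈ ∂M ∩ G₋` under `db` runs along `∂M ∩ G₋` on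
`[t₀, tb)`, then the reachable set `X_t(xb)` is contained in `M` for every `t ∈ [t₀, tb)`,
and consequently the barrier trajectory lies on the boundary of the reachable set:
`x^(db)(t) ∈ ∂X_t(xb)` for every `t ∈ [t₀, tb)`. -/
theorem barrier_on_reachable_boundary {n m p : ℕ}
    (f : (Fin n → ℝ) → (Fin m → ℝ) → Fin n → ℝ)
    (D : Set (Fin m → ℝ)) (t₀ : ℝ) (g : Fin p → (Fin n → ℝ) → ℝ)
    (hDcomp : IsCompact D) (hDconv : Convex ℝ D)
    (hA3 : A3 f D t₀)
    (hg : ∀ i, ContDiff ℝ 2 (g i))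
    (hMclosed : IsClosed (Rset f D t₀ g))
    (hMrpi : IsRPI f D t₀ (Rset f D t₀ g))
    (xb : Fin n → ℝ)
    (hxb : xb ∈ frontier (Rset f D t₀ g) ∧ ∀ i, g i xb < 0)
    (db : ℝ → Fin m → ℝ) (x : ℝ → Fin n → ℝ) (tb : ℝ)
    (hadm : Admissible D t₀ db) (hsol : IsSolution f t₀ xb db x)
    (hbarrier : ∀ t ∈ Ico t₀ tb, x t ∈ frontier (Rset f D t₀ g) ∧ ∀ i, g i (x t) < 0) :
    ∀ t ∈ Ico t₀ tb,
      ReachSet f D t₀ xb t ⊆ Rset f D t₀ g ∧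
      x t ∈ frontier (ReachSet f D t₀ xb t) := by
  intro t ht
  have hxbM : xb ∈ Rset f D t₀ g :=
    hMclosed.closure_eq ▸ frontier_subset_closure hxb.1
  have hsub : ReachSet f D t₀ xb t ⊆ Rset f D t₀ g := by
    rintro y ⟨d, x', hadm', hsol', rfl⟩
    exact hMrpi xb hxbM d hadm' x' hsol' t ht.1
  refine ⟨hsub, ?_, ?_⟩
  · exact subset_closure ⟨db, x, hadm, hsol, rfl⟩
  · intro hmem
    have h1 : x t ∈ interior (Rset f D t₀ g) := interior_mono hsub hmem
    have h2 := (hbarrier t ht).1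
    exact h2.2 h1
end

section
/- For the scalar system ẋ(t) = x(t) + d(t) with admissible disturbances |d(t)| ≤ 1 and constraint x ≤ 0, the maximal robust positively invariant set equals (−∞, −1]: the set {x₀ ≤ 0 : for every measurable d with values in [−1, 1], the solution from x₀ satisfies x(t) ≤ 0 for all t ≥ 0} is exactly {x₀ : x₀ ≤ −1}. -/
open MeasureTheory Set

/-- An admissible disturbance for the scalar example: Lebesgue measurable with
`|d t| ≤ 1` on `[0, ∞)`. -/
def AdmScalar (d : ℝ → ℝ) : Prop :=
  Measurable d ∧ ∀ t, 0 ≤ t → |d t| ≤ 1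

/-- A solution of the scalar system `ẋ = x + d` from `x₀` under `d`: an (absolutely
continuous) function satisfying `x t = x₀ + ∫₀ᵗ (x s + d s) ds` for all `t ≥ 0`. -/
def ScalarSol (d : ℝ → ℝ) (x₀ : ℝ) (x : ℝ → ℝ) : Prop :=
  x 0 = x₀ ∧ ∀ t, 0 ≤ t →
    IntervalIntegrable (fun s => x s + d s) volume 0 t ∧
    x t = x₀ + ∫ s in (0:ℝ)..t, (x s + d s)

/-- Grönwall-type bound for solutions of the scalar system. -/
lemma scalar_sol_bound {d x : ℝ → ℝ} {x₀ : ℝ} (hd : AdmScalar d) (hx : ScalarSol d x₀ x)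
    {T : ℝ} (hT : 0 ≤ T) : x T ≤ (x₀ + 1) * Real.exp T - 1 := by
  obtain ⟨hx0, hsol⟩ := hx
  have hint : IntervalIntegrable (fun s => x s + d s) volume 0 T := (hsol T hT).1
  have hIcc : uIcc (0:ℝ) T = Icc 0 T := uIcc_of_le hT
  -- continuity of x on [0, T]
  have hcont : ContinuousOn x (Icc 0 T) := by
    have h1 : ContinuousOn (fun t => x₀ + ∫ s in (0:ℝ)..t, (x s + d s)) (Icc 0 T) := by
      have := intervalIntegral.continuousOn_primitive_interval' hint
        (a := 0) (by simp [hIcc, hT])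
      rw [hIcc] at this
      exact continuousOn_const.add this
    refine h1.congr fun t ht => ?_
    exact (hsol t ht.1).2
  -- apply Grönwall
  have key := le_gronwallBound_of_liminf_deriv_right_le (f := x) (f' := fun t => x t + 1)
    (δ := x₀) (K := 1) (ε := 1) (a := 0) (b := T) hcont ?_ (le_of_eq hx0) ?_
  · have := key T ⟨hT, le_refl T⟩
    rw [gronwallBound_of_K_ne_0 one_ne_zero] at this
    simp only [one_mul, sub_zero, ne_eq, one_ne_zero, not_false_eq_true, div_self] at this
    nlinarith [this]
  · -- slope condition
    intro t ht r hr
    have hr' : x t + 1 < r := hr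
    set δ := (r - (x t + 1)) / 2 with hδdef
    have hδpos : 0 < δ := by simp only [hδdef]; linarith [hr']
    -- continuity at t gives a ball
    have hct : ContinuousWithinAt x (Icc 0 T) t := hcont t ⟨ht.1, ht.2.le⟩
    rw [Metric.continuousWithinAt_iff] at hct
    obtain ⟨ε, hεpos, hε⟩ := hct δ hδpos
    set c := min (t + ε / 2) T with hcdef
    have htc : t < c := lt_min (by linarith) ht.2
    -- all z in (t, c] satisfy slope < r
    have hall : ∀ z ∈ Ioc t c, (z - t)⁻¹ * (x z - x t) < r := by
      intro z hz
      have hzt : t < z := hz.1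
      have hzT : z ≤ T := hz.2.trans (min_le_right _ _)
      have hz0 : (0:ℝ) ≤ z := le_trans ht.1 hzt.le
      have hsub : uIcc t z ⊆ uIcc (0:ℝ) T := by
        rw [hIcc, uIcc_of_le hzt.le]
        exact Icc_subset_Icc ht.1 hzT
      have hint_tz : IntervalIntegrable (fun s => x s + d s) volume t z :=
        hint.mono_set hsub
      -- x z - x t = ∫ t..z (x + d)
      have hdiff : x z - x t = ∫ s in t..z, (x s + d s) := by
        rw [(hsol z hz0).2, (hsol t ht.1).2]
        have hadd := intervalIntegral.integral_add_adjacent_intervals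
          (hint.mono_set (by rw [hIcc, uIcc_of_le ht.1]; exact Icc_subset_Icc le_rfl ht.2.le))
          hint_tz
        ring_nf
        linarith [hadd]
      -- pointwise bound on [t, z]
      have hbound : ∀ s ∈ Icc t z, x s + d s ≤ x t + δ + 1 := by
        intro s hs
        have hs0 : (0:ℝ) ≤ s := le_trans ht.1 hs.1
        have hsT : s ∈ Icc (0:ℝ) T := ⟨hs0, hs.2.trans hzT⟩
        have hdist : dist s t < ε := by
          rw [Real.dist_eq, abs_of_nonneg (by linarith [hs.1])]
          have : z ≤ t + ε / 2 := hz.2.trans (min_le_left _ _)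
          linarith [hs.2]
        have := hε hsT hdist
        rw [Real.dist_eq] at this
        have hxs : x s ≤ x t + δ := by
          have := abs_lt.mp this
          linarith [this.1, this.2]
        have hds : d s ≤ 1 := (abs_le.mp (hd.2 s hs0)).2
        linarith
      have hmono : (∫ s in t..z, (x s + d s)) ≤ ∫ _s in t..z, (x t + δ + 1) :=
        intervalIntegral.integral_mono_on hzt.le hint_tz (intervalIntegrable_const) hbound
      rw [intervalIntegral.integral_const, smul_eq_mul] at hmono
      have hpos : 0 < z - t := by linarith
      rw [hdiff]
      calc (z - t)⁻¹ * (∫ s in t..z, (x s + d s)) ≤ (z - t)⁻¹ * ((z - t) * (x t + δ + 1)) := by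
              apply mul_le_mul_of_nonneg_left hmono (inv_nonneg.mpr hpos.le)
        _ = x t + δ + 1 := by field_simp
        _ < r := by simp only [hδdef]; linarith [hr']
    exact Filter.Eventually.frequently (Filter.eventually_of_mem (Ioc_mem_nhdsGT htc) hall)
  · intro t _
    simp

/-- for `ẋ = x + d`, `|d| ≤ 1`, with constraint `x ≤ 0`, the maximal robust
positively invariant set equals `(−∞, −1]`. -/
theorem scalar_MRPI_eq :
    {x₀ : ℝ | x₀ ≤ 0 ∧ ∀ (d : ℝ → ℝ) (x : ℝ → ℝ), AdmScalar d → ScalarSol d x₀ x →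
      ∀ t, 0 ≤ t → x t ≤ 0} = Iic (-1 : ℝ) := by
  ext x₀
  simp only [mem_setOf_eq, mem_Iic]
  constructor
  · rintro ⟨hx0, H⟩
    by_contra h
    push_neg at h
    set c := x₀ + 1 with hc
    have hcpos : 0 < c := by linarith
    have hc1 : c ≤ 1 := by linarith
    set x : ℝ → ℝ := fun t => c * Real.exp t - 1 with hxdef
    have hadm : AdmScalar (fun _ => (1:ℝ)) := ⟨measurable_const, fun t _ => by norm_num⟩
    have hsol : ScalarSol (fun _ => (1:ℝ)) x₀ x := by
      refine ⟨by simp [hxdef, hc], fun t ht => ?_⟩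
      have heq : (fun s => x s + 1) = fun s => c * Real.exp s := by
        funext s; simp [hxdef]
      constructor
      · rw [heq]; exact (continuous_const.mul Real.continuous_exp).intervalIntegrable 0 t
      · rw [heq]
        rw [intervalIntegral.integral_const_mul, integral_exp]
        simp only [hxdef, Real.exp_zero, hc]; ring
    set t₀ := Real.log (2 / c) with ht₀
    have h2c : (1:ℝ) ≤ 2 / c := by
      rw [le_div_iff₀ hcpos]; linarith
    have ht₀pos : 0 ≤ t₀ := Real.log_nonneg h2c
    have := H (fun _ => 1) x hadm hsol t₀ ht₀pos
    have hexp : Real.exp t₀ = 2 / c := Real.exp_log (by positivity)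
    simp only [hxdef] at this
    rw [hexp] at this
    have : c * (2 / c) = 2 := by field_simp
    nlinarith [this]
  · intro h
    refine ⟨by linarith, fun d x hd hx t ht => ?_⟩
    have := scalar_sol_bound hd hx ht
    nlinarith [Real.exp_pos t, this]
end

section
/- For the scalar system ẋ(t) = x(t) + d(t) with admissible disturbances |d(t)| ≤ 1 and constraint x ≤ 0, the barrier point x̄ = −1 admits no admissible disturbance that keeps the trajectory on the barrier and reaches the constraint boundary in finite time: every solution from x₀ = −1 satisfies x(t) ≤ −1 for all t ≥ 0, hence there is no admissible d and finite t̄ > 0 with x(t̄) = 0. Moreover, (A6) fails for this system: for every finite T ≥ 0 the finite-horizon set M_T = {x₀ : every admissible solution from x₀ satisfies x(t) ≤ 0 for all t ∈ [0, T]} equals (−∞, e^(−T) − 1] and is strictly larger than M = (−∞, −1]. -/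
/-!
If the disturbance is bounded above by `c`, put `w t = x₀ + c + c t + ∫₀ᵗ x`. Unlike `x`, which
is only absolutely continuous, `w` is differentiable on `[0, ∞)`, and `∫₀ᵗ d ≤ c t` gives
`x + c ≤ w` and `w' = x + c ≤ w`. Grönwall's inequality then bounds `x` by `(x₀ + c) eᵗ - c`,
the solution under the constant disturbance `c`. For `c = 1` that disturbance is admissible, so it
is the worst case: from `-1` it stays at `-1`, and from `x₀` it stays in `(-∞, 0]` on `[0, T]`
exactly when `(x₀ + 1) eᵀ ≤ 1`.
-/

open MeasureTheory Set

open Real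

section Primitive

variable {E : Type*} [NormedAddCommGroup E] [NormedSpace ℝ E] {f : ℝ → E} {a : ℝ}

theorem continuousOn_primitive_Ici (hf : ∀ b, a ≤ b → IntervalIntegrable f volume a b) :
    ContinuousOn (fun b => ∫ s in a..b, f s) (Ici a) := by
  refine continuousOn_of_locally_continuousOn fun t ht => ⟨Iio (t + 1), isOpen_Iio, by simp, ?_⟩
  have hsub : Ici a ∩ Iio (t + 1) ⊆ uIcc a (t + 1) := by
    rw [uIcc_of_le (by linarith [mem_Ici.mp ht])]
    exact fun s hs => ⟨hs.1, hs.2.le⟩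
  exact (intervalIntegral.continuousOn_primitive_interval'
    (hf _ (by linarith [mem_Ici.mp ht])) left_mem_uIcc).mono hsub

theorem hasDerivWithinAt_primitive_Ici [CompleteSpace E] (hf : ContinuousOn f (Ici a)) {t : ℝ}
    (ht : a ≤ t) :
    HasDerivWithinAt (fun b => ∫ s in a..b, f s) (f t) (Ici t) t := by
  have hIoi : Ioi t ⊆ Ici a := fun s hs => ht.trans (le_of_lt hs)
  refine intervalIntegral.integral_hasDerivWithinAt_right ?_
    ((hf.mono hIoi).stronglyMeasurableAtFilter_nhdsWithin measurableSet_Ioi t)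
    ((hf t ht).mono hIoi)
  exact (hf.mono (by rw [uIcc_of_le ht]; exact Icc_subset_Ici_self)).intervalIntegrable

end Primitive

theorem AdmScalar.le_one {d : ℝ → ℝ} (hd : AdmScalar d) {t : ℝ} (ht : 0 ≤ t) : d t ≤ 1 :=
  (abs_le.mp (hd.2 t ht)).2

theorem admScalar_one : AdmScalar fun _ => 1 :=
  ⟨measurable_const, fun _ _ => by norm_num⟩

namespace ScalarSol

variable {d x : ℝ → ℝ} {x₀ : ℝ}

theorem continuousOn (hs : ScalarSol d x₀ x) : ContinuousOn x (Ici 0) :=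
  (continuousOn_const.add (continuousOn_primitive_Ici fun t ht => (hs.2 t ht).1)).congr
    fun t ht => (hs.2 t ht).2

theorem intervalIntegrable (hs : ScalarSol d x₀ x) {t : ℝ} (ht : 0 ≤ t) :
    IntervalIntegrable x volume 0 t :=
  (hs.continuousOn.mono (by rw [uIcc_of_le ht]; exact Icc_subset_Ici_self)).intervalIntegrable

theorem eq_add_integral_add_integral (hs : ScalarSol d x₀ x) {t : ℝ} (ht : 0 ≤ t) :
    x t = x₀ + (∫ s in (0:ℝ)..t, x s) + ∫ s in (0:ℝ)..t, d s := by
  have hd : IntervalIntegrable d volume 0 t := by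
    simpa using (hs.2 t ht).1.sub (hs.intervalIntegrable ht)
  rw [(hs.2 t ht).2, intervalIntegral.integral_add (hs.intervalIntegrable ht) hd, add_assoc]

theorem le_of_disturbance_le (hs : ScalarSol d x₀ x) {c : ℝ} (hd : ∀ t, 0 ≤ t → d t ≤ c)
    {t : ℝ} (ht : 0 ≤ t) : x t ≤ (x₀ + c) * exp t - c := by
  set w : ℝ → ℝ := fun t => x₀ + c + c * t + ∫ s in (0:ℝ)..t, x s
  have hw_deriv : ∀ t, 0 ≤ t → HasDerivWithinAt w (x t + c) (Ici t) t := fun t ht =>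
    ((((hasDerivAt_id t).const_mul c).hasDerivWithinAt.const_add (x₀ + c)).add
      (hasDerivWithinAt_primitive_Ici hs.continuousOn ht)).congr_deriv (by ring)
  have hx_le_w : ∀ t, 0 ≤ t → x t + c ≤ w t := fun t ht => by
    have hD : ∫ s in (0:ℝ)..t, d s ≤ c * t := by
      calc ∫ s in (0:ℝ)..t, d s ≤ ∫ _ in (0:ℝ)..t, c :=
            intervalIntegral.integral_mono_on ht
              (by simpa using (hs.2 t ht).1.sub (hs.intervalIntegrable ht))
              intervalIntegrable_const fun s hs => hd s hs.1
        _ = c * t := by simp [mul_comm]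
    rw [hs.eq_add_integral_add_integral ht]
    linarith
  have hw_cont : ContinuousOn w (Icc 0 t) :=
    ((continuous_const.add (continuous_const.mul continuous_id)).continuousOn.add
      (continuousOn_primitive_Ici fun _ => hs.intervalIntegrable)).mono Icc_subset_Ici_self
  have := le_gronwallBound_of_liminf_deriv_right_le (δ := x₀ + c) (K := 1) (ε := 0) hw_cont
    (fun s hs _ hr => (hw_deriv s hs.1).liminf_right_slope_le hr) (by simp [w])
    (fun s hs => by simpa using hx_le_w s hs.1) t ⟨ht, le_rfl⟩
  rw [gronwallBound_ε0, one_mul, sub_zero] at this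
  linarith [hx_le_w t ht, this]

theorem const (x₀ c : ℝ) : ScalarSol (fun _ => c) x₀ (fun t => (x₀ + c) * exp t - c) := by
  have hsum : (fun s => (x₀ + c) * exp s - c + c) = fun s => (x₀ + c) * exp s := by
    funext s; ring
  refine ⟨by simp, fun t _ => ⟨?_, ?_⟩⟩ <;> simp only [hsum]
  · exact (continuous_const.mul continuous_exp).intervalIntegrable 0 t
  · rw [intervalIntegral.integral_const_mul, integral_exp, exp_zero]
    ring

theorem le_neg_one (hd : AdmScalar d) (hs : ScalarSol d (-1) x) {t : ℝ} (ht : 0 ≤ t) :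
    x t ≤ -1 := by
  simpa using hs.le_of_disturbance_le (fun _ => hd.le_one) ht

end ScalarSol

/-- The finite-horizon set `M_T`. -/
def finiteHorizonSet (T : ℝ) : Set ℝ :=
  {x₀ | ∀ (d : ℝ → ℝ) (x : ℝ → ℝ), AdmScalar d → ScalarSol d x₀ x → ∀ t ∈ Icc (0:ℝ) T, x t ≤ 0}

theorem finiteHorizonSet_eq {T : ℝ} (hT : 0 ≤ T) : finiteHorizonSet T = Iic (exp (-T) - 1) := by
  ext x₀
  refine ⟨fun h => ?_, fun h d x hd hs t ht => ?_⟩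
  · have hT' := h _ _ admScalar_one (ScalarSol.const x₀ 1) T ⟨hT, le_rfl⟩
    rw [mem_Iic, exp_neg, le_sub_iff_add_le, ← one_div, le_div_iff₀ (exp_pos T)]
    linarith
  · have hx₀ : x₀ + 1 ≤ exp (-T) := by linarith [mem_Iic.mp h]
    calc x t ≤ (x₀ + 1) * exp t - 1 := hs.le_of_disturbance_le (fun _ => hd.le_one) ht.1
      _ ≤ exp (-T) * exp t - 1 := by gcongr
      _ = exp (t - T) - 1 := by rw [← exp_add, neg_add_eq_sub]
      _ ≤ 0 := by linarith [exp_le_one_iff.mpr (sub_nonpos.mpr ht.2)]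

/-- for `ẋ = x + d`, `|d| ≤ 1`, constraint `x ≤ 0`: every admissible solution
from the barrier point `x₀ = −1` satisfies `x t ≤ −1` for all `t ≥ 0`; hence no admissible
disturbance steers the barrier point to the constraint boundary in finite time. Moreover
(A6) fails: for every finite `T ≥ 0` the finite-horizon set `M_T` equals
`(−∞, e^(−T) − 1]`, which is strictly larger than `M = (−∞, −1]`. -/
theorem scalar_barrier_never_reaches_boundary :
    (∀ (d : ℝ → ℝ) (x : ℝ → ℝ), AdmScalar d → ScalarSol d (-1) x →
      ∀ t, 0 ≤ t → x t ≤ -1) ∧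
    (¬ ∃ (d : ℝ → ℝ) (x : ℝ → ℝ) (tb : ℝ), AdmScalar d ∧ ScalarSol d (-1) x ∧
      0 < tb ∧ x tb = 0) ∧
    (∀ T : ℝ, 0 ≤ T →
      {x₀ : ℝ | ∀ (d : ℝ → ℝ) (x : ℝ → ℝ), AdmScalar d → ScalarSol d x₀ x →
        ∀ t ∈ Icc (0:ℝ) T, x t ≤ 0} = Iic (Real.exp (-T) - 1) ∧
      Iic (-1 : ℝ) ⊂ Iic (Real.exp (-T) - 1)) := by
  refine ⟨fun d x hd hs t ht => hs.le_neg_one hd ht, ?_, fun T hT => ⟨?_, ?_⟩⟩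
  · rintro ⟨d, x, tb, hd, hs, htb, hx_tb⟩
    linarith [hs.le_neg_one hd htb.le]
  · exact finiteHorizonSet_eq hT
  · exact Iic_ssubset_Iic.mpr (by linarith [exp_pos (-T)])
end

section
/- For the double integrator ẋ₁ = x₂, ẋ₂ = d with disturbance set D = [−0.5, −0.25] and constraint function g(x) = −x₁² − x₂² + 1, the set of points of ultimate tangentiality, i.e. the set of z = (z₁, z₂) ∈ ℝ² with z₁² + z₂² = 1 satisfying max_{d ∈ [−0.5, −0.25]} (−2 z₁ z₂ − 2 z₂ d) = 0, consists of exactly four points: (1, 0), (−1, 0), (1/2, √3/2) and (1/4, −√15/4). -/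
open Set

/-- for the double integrator `ẋ₁ = x₂`, `ẋ₂ = d` with `D = [−0.5, −0.25]`
and constraint function `g x = −x₁² − x₂² + 1`, the points of ultimate tangentiality, i.e.
the points `z` on the unit circle where `max_{d ∈ D} L_f g(z, d) = 0` with
`L_f g(z, d) = −2 z₁ z₂ − 2 z₂ d`, are exactly the four points
`(1, 0)`, `(−1, 0)`, `(1/2, √3/2)` and `(1/4, −√15/4)`. -/
theorem double_integrator_ultimate_tangentiality_points :
    {z : ℝ × ℝ | z.1 ^ 2 + z.2 ^ 2 = 1 ∧
      IsGreatest ((fun d => -2 * z.1 * z.2 - 2 * z.2 * d) '' Icc (-0.5 : ℝ) (-0.25)) 0} =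
    ({((1 : ℝ), (0 : ℝ)), (-1, 0), (1 / 2, Real.sqrt 3 / 2), (1 / 4, -Real.sqrt 15 / 4)} :
      Set (ℝ × ℝ)) := by
  have h3 : Real.sqrt 3 ^ 2 = 3 := Real.sq_sqrt (by norm_num)
  have h15 : Real.sqrt 15 ^ 2 = 15 := Real.sq_sqrt (by norm_num)
  have h3pos : 0 < Real.sqrt 3 := Real.sqrt_pos.mpr (by norm_num)
  have h15pos : 0 < Real.sqrt 15 := Real.sqrt_pos.mpr (by norm_num)
  ext ⟨x, y⟩
  simp only [Set.mem_setOf_eq, IsGreatest, upperBounds, Set.mem_image, Set.mem_Icc,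
    Set.mem_insert_iff, Set.mem_singleton_iff, Prod.mk.injEq, Set.mem_setOf_eq]
  constructor
  · rintro ⟨hc, ⟨d, ⟨hd1, hd2⟩, hde⟩, hub⟩
    norm_num at hd1 hd2
    have hA : -2 * x * y - 2 * y * (-(1/2) : ℝ) ≤ 0 :=
      hub ⟨-(1/2), ⟨by norm_num, by norm_num⟩, rfl⟩
    have hB : -2 * x * y - 2 * y * (-(1/4) : ℝ) ≤ 0 :=
      hub ⟨-(1/4), ⟨by norm_num, by norm_num⟩, rfl⟩
    by_cases hy : y = 0
    · subst hy
      have h1 : (x - 1) * (x + 1) = 0 := by nlinarith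
      rcases mul_eq_zero.mp h1 with h | h
      · exact Or.inl ⟨by linarith, rfl⟩
      · exact Or.inr (Or.inl ⟨by linarith, rfl⟩)
    · have hxd : x = -d := by
        have h2 : (-2 * y) * (x + d) = 0 := by linarith [hde, (by ring :
          -2 * x * y - 2 * y * d = (-2 * y) * (x + d))]
        rcases mul_eq_zero.mp h2 with h | h
        · exact absurd (by linarith : y = 0) hy
        · linarith
      rcases lt_or_gt_of_ne hy with hyneg | hypos
      · -- y < 0 : x = 1/4, y = -√15/4
        have hx : x = 1/4 := by nlinarith
        subst hx
        have hy2 : (y + Real.sqrt 15 / 4) * (y - Real.sqrt 15 / 4) = 0 := by nlinarith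
        rcases mul_eq_zero.mp hy2 with h | h
        · exact Or.inr (Or.inr (Or.inr ⟨rfl, by linarith⟩))
        · nlinarith
      · -- y > 0 : x = 1/2, y = √3/2
        have hx : x = 1/2 := by nlinarith
        subst hx
        have hy2 : (y - Real.sqrt 3 / 2) * (y + Real.sqrt 3 / 2) = 0 := by nlinarith
        rcases mul_eq_zero.mp hy2 with h | h
        · exact Or.inr (Or.inr (Or.inl ⟨rfl, by linarith⟩))
        · nlinarith
  · rintro (⟨rfl, rfl⟩ | ⟨rfl, rfl⟩ | ⟨rfl, rfl⟩ | ⟨rfl, rfl⟩)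
    · refine ⟨by norm_num, ⟨-(1/2), ⟨by norm_num, by norm_num⟩, by norm_num⟩, ?_⟩
      rintro a ⟨d, ⟨hd1, hd2⟩, rfl⟩
      norm_num
    · refine ⟨by norm_num, ⟨-(1/2), ⟨by norm_num, by norm_num⟩, by norm_num⟩, ?_⟩
      rintro a ⟨d, ⟨hd1, hd2⟩, rfl⟩
      norm_num
    · refine ⟨by nlinarith, ⟨-(1/2), ⟨by norm_num, by norm_num⟩, by ring⟩, ?_⟩
      rintro a ⟨d, ⟨hd1, hd2⟩, rfl⟩
      norm_num at hd1 hd2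
      linarith [mul_nonneg h3pos.le (show (0:ℝ) ≤ 1 + 2 * d by linarith)]
    · refine ⟨by nlinarith, ⟨-(1/4), ⟨by norm_num, by norm_num⟩, by ring⟩, ?_⟩
      rintro a ⟨d, ⟨hd1, hd2⟩, rfl⟩
      norm_num at hd1 hd2
      linarith [mul_nonneg h15pos.le (show (0:ℝ) ≤ -(1/8) - d/2 by linarith)]
end
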